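/- arXiv:0705.1485 — 3 statements merged into one kernel-verified Lean document; each statement's English description precedes it below -/
import Mathlib

section
/- In the dihedral Artin group A_k, define φ(w,z) = π(w⁻¹z) − π(z) for w,z ∈ A_k, where π is the vector of partial sums of canonical-factor counts in the left normal form. Then Σ_{i=0}^{k−1} φᵢ(w,z) = Σ_{i=0}^{k−1} πᵢ(w⁻¹); in particular this sum is independent of z. -/
/-- Alternating product `prodd s t n = stst⋯` with `n` factors. -/
def prodd {G : Type*} [Monoid G] : G → G → ℕ → G
  | _, _, 0 => 1
  | s, t, n + 1 => s * prodd t s n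

/-- The single relation `prod(a,b;k) = prod(b,a;k)` of the dihedral Artin group. -/
def ArtinRels (k : ℕ) : Set (FreeGroup Bool) :=
  {prodd (FreeGroup.of true) (FreeGroup.of false) k *
    (prodd (FreeGroup.of false) (FreeGroup.of true) k)⁻¹}

/-- The Artin group of dihedral type `A_k`. -/
abbrev Artin (k : ℕ) : Type := PresentedGroup (ArtinRels k)

def Artin.a (k : ℕ) : Artin k := PresentedGroup.of true
def Artin.b (k : ℕ) : Artin k := PresentedGroup.of false

/-- The Garside element `Δ = prod(a,b;k)`. -/
def Artin.Delta (k : ℕ) : Artin k := prodd (Artin.a k) (Artin.b k) k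

/-- The set `M⁺` of proper alternating positive words of length `1,…,k-1`. -/
def Mplus (k : ℕ) : Set (Artin k) :=
  {w | ∃ i, 1 ≤ i ∧ i ≤ k - 1 ∧
    (w = prodd (Artin.a k) (Artin.b k) i ∨ w = prodd (Artin.b k) (Artin.a k) i)}

/-- The Artin generating set `{a, b, a⁻¹, b⁻¹}`. -/
def artinGens (k : ℕ) : Set (Artin k) :=
  {Artin.a k, Artin.b k, (Artin.a k)⁻¹, (Artin.b k)⁻¹}

/-- Word length of `w` with respect to a generating set `S` (assumed symmetric). -/
noncomputable def wordLength {G : Type*} [Group G] (S : Set G) (w : G) : ℕ :=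
  sInf {n | ∃ l : List G, l.length = n ∧ (∀ g ∈ l, g ∈ S) ∧ l.prod = w}

/-- `x = Δ^r z₁⋯zₘ` is a left normal form: the factors lie in `M⁺` and the number
of factors is minimal among all such decompositions. -/
def IsLeftNF (k : ℕ) (x : Artin k) (r : ℤ) (zs : List (Artin k)) : Prop :=
  (∀ z ∈ zs, z ∈ Mplus k) ∧ x = Artin.Delta k ^ r * zs.prod ∧
    ∀ (r' : ℤ) (zs' : List (Artin k)), (∀ z ∈ zs', z ∈ Mplus k) →
      x = Artin.Delta k ^ r' * zs'.prod → zs.length ≤ zs'.length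

/-- The number of canonical factors of length `i` in the list of factors `zs`. -/
noncomputable def countLen {k : ℕ} (zs : List (Artin k)) (i : ℕ) : ℕ :=
  Nat.card {j : Fin zs.length //
    zs.get j = prodd (Artin.a k) (Artin.b k) i ∨ zs.get j = prodd (Artin.b k) (Artin.a k) i}

/-- The vector `π`: `piOf r zs j = r + m_{k-1} + ⋯ + m_{k-j}`. -/
noncomputable def piOf (k : ℕ) (r : ℤ) (zs : List (Artin k)) (j : ℕ) : ℤ :=
  r + ∑ t ∈ Finset.range j, (countLen zs (k - 1 - t) : ℤ)

/-!
Let `deg : A_k → ℤ` be the exponent-sum homomorphism `a, b ↦ 1` (the relation is homogeneous).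
For any decomposition `x = Δʳ z₁⋯zₘ` into alternating words, `∑ᵢ πᵢ = k r + ∑ᵢ i mᵢ = deg x`,
since `Δ` has degree `k` and a canonical factor of length `i` has degree `i`. Hence
`∑ φᵢ(w,z) = deg (w⁻¹ z) - deg z = deg w⁻¹ = ∑ πᵢ(w⁻¹)`.
-/

open Finset

theorem map_prodd {G H : Type*} [Monoid G] [Monoid H] (f : G →* H) (s t : G) (n : ℕ) :
    f (prodd s t n) = prodd (f s) (f t) n := by
  induction n generalizing s t with
  | zero => simp [prodd]
  | succ n ih => simp [prodd, ih]

theorem prodd_self {G : Type*} [Monoid G] (c : G) (n : ℕ) : prodd c c n = c ^ n := by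
  induction n with
  | zero => simp [prodd]
  | succ n ih => rw [prodd, ih, pow_succ']

theorem Finset.sum_range_sum_range {M : Type*} [AddCommMonoid M] (g : ℕ → M) (n : ℕ) :
    ∑ i ∈ range n, ∑ t ∈ range i, g t = ∑ t ∈ range n, (n - 1 - t) • g t := by
  induction n with
  | zero => simp
  | succ n ih =>
    rw [sum_range_succ, ih, sum_range_succ, Nat.add_sub_cancel, Nat.sub_self, zero_smul,
      add_zero, ← sum_add_distrib]
    refine sum_congr rfl fun t ht => ?_
    rw [← succ_nsmul, show n - 1 - t + 1 = n - t by have := mem_range.mp ht; omega]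

namespace Artin

variable (k : ℕ)

theorem lift_const_rels_eq_one :
    ∀ r ∈ ArtinRels k, FreeGroup.lift (fun _ : Bool => Multiplicative.ofAdd (1 : ℤ)) r = 1 := by
  rintro r rfl
  simp [map_prodd, prodd_self]

noncomputable def degreeHom : Artin k →* Multiplicative ℤ :=
  PresentedGroup.toGroup (lift_const_rels_eq_one k)

noncomputable def degree (x : Artin k) : ℤ := (degreeHom k x).toAdd

variable {k}

theorem degree_mul (x y : Artin k) : degree k (x * y) = degree k x + degree k y := by
  simp [degree]

theorem degree_zpow (x : Artin k) (n : ℤ) : degree k (x ^ n) = degree k x * n := by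
  simp [degree, mul_comm]

theorem degree_list_prod (l : List (Artin k)) : degree k l.prod = (l.map (degree k)).sum := by
  induction l with
  | nil => simp [degree]
  | cons x l ih => simp [degree_mul, ih]

@[simp]
theorem degree_prodd_ab (n : ℕ) : degree k (prodd (a k) (b k) n) = n := by
  simp [degree, map_prodd, degreeHom, a, b, PresentedGroup.toGroup.of, prodd_self]

@[simp]
theorem degree_prodd_ba (n : ℕ) : degree k (prodd (b k) (a k) n) = n := by
  simp [degree, map_prodd, degreeHom, a, b, PresentedGroup.toGroup.of, prodd_self]

theorem degree_Delta : degree k (Delta k) = k := degree_prodd_ab k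

theorem eq_prodd_iff_degree_eq {z : Artin k} (hz : z ∈ Mplus k) (s : ℕ) :
    (z = prodd (a k) (b k) s ∨ z = prodd (b k) (a k) s) ↔ degree k z = s := by
  obtain ⟨i, -, -, hzi⟩ := hz
  have hdeg : degree k z = i := by rcases hzi with rfl | rfl <;> simp
  refine ⟨by rintro (rfl | rfl) <;> simp, fun hs => ?_⟩
  obtain rfl : i = s := by omega
  exact hzi

theorem exists_degree_eq_of_mem_Mplus {z : Artin k} (hz : z ∈ Mplus k) :
    ∃ i < k, degree k z = i := by
  obtain ⟨i, hi₁, hik, hzi⟩ := hz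
  exact ⟨i, by omega, by rcases hzi with rfl | rfl <;> simp⟩

end Artin

section

open Artin

variable {k : ℕ}

theorem countLen_eq_sum_ite {zs : List (Artin k)} (hzs : ∀ z ∈ zs, z ∈ Mplus k) (s : ℕ) :
    (countLen zs s : ℤ) = ∑ j : Fin zs.length, if degree k zs[j.1] = s then 1 else 0 := by
  classical
  rw [countLen, Nat.card_eq_fintype_card, Fintype.card_subtype, card_filter]
  push_cast
  refine sum_congr rfl fun j _ => ?_
  simp only [List.get_eq_getElem, eq_prodd_iff_degree_eq (hzs _ (List.getElem_mem _))]

theorem sum_mul_countLen_eq_degree_prod {zs : List (Artin k)} (hzs : ∀ z ∈ zs, z ∈ Mplus k) :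
    ∑ s ∈ range k, (s : ℤ) * countLen zs s = degree k zs.prod := by
  calc ∑ s ∈ range k, (s : ℤ) * countLen zs s
      = ∑ j : Fin zs.length, ∑ s ∈ range k, if degree k zs[j.1] = s then (s : ℤ) else 0 := by
        simp_rw [countLen_eq_sum_ite hzs, mul_sum, mul_ite, mul_one, mul_zero]
        exact sum_comm
    _ = ∑ j : Fin zs.length, degree k zs[j.1] := by
        refine sum_congr rfl fun j _ => ?_
        obtain ⟨i, hik, hi⟩ := exists_degree_eq_of_mem_Mplus (hzs _ (List.getElem_mem j.2))
        simp [hi, hik]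
    _ = degree k zs.prod := by rw [Fin.sum_univ_fun_getElem, degree_list_prod]

theorem sum_piOf (r : ℤ) (zs : List (Artin k)) :
    ∑ i ∈ range k, piOf k r zs i = k * r + ∑ s ∈ range k, (s : ℤ) * countLen zs s := by
  simp only [piOf, sum_add_distrib, sum_const, card_range, nsmul_eq_mul, sum_range_sum_range]
  exact congrArg _ (sum_range_reflect (fun s => (s : ℤ) * countLen zs s) k)

theorem sum_piOf_eq_degree {x : Artin k} {r : ℤ} {zs : List (Artin k)}
    (hzs : ∀ z ∈ zs, z ∈ Mplus k) (hx : x = Delta k ^ r * zs.prod) :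
    ∑ i ∈ range k, piOf k r zs i = degree k x := by
  rw [sum_piOf, sum_mul_countLen_eq_degree_prod hzs, hx, degree_mul, degree_zpow, degree_Delta]

end

theorem sum_phi_eq_sum_pi_general (k : ℕ) (w z : Artin k)
    (r₁ r₂ r₃ : ℤ) (zs₁ zs₂ zs₃ : List (Artin k))
    (h₁ : IsLeftNF k (w⁻¹ * z) r₁ zs₁) (h₂ : IsLeftNF k z r₂ zs₂)
    (h₃ : IsLeftNF k w⁻¹ r₃ zs₃) :
    ∑ i ∈ Finset.range k, (piOf k r₁ zs₁ i - piOf k r₂ zs₂ i) =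
      ∑ i ∈ Finset.range k, piOf k r₃ zs₃ i := by
  rw [sum_sub_distrib, sum_piOf_eq_degree h₁.1 h₁.2.1, sum_piOf_eq_degree h₂.1 h₂.2.1,
    sum_piOf_eq_degree h₃.1 h₃.2.1, Artin.degree_mul, add_sub_cancel_right]

theorem sum_phi_eq_sum_pi (k : ℕ) (hk : 3 ≤ k) (w z : Artin k)
    (r₁ r₂ r₃ : ℤ) (zs₁ zs₂ zs₃ : List (Artin k))
    (h₁ : IsLeftNF k (w⁻¹ * z) r₁ zs₁) (h₂ : IsLeftNF k z r₂ zs₂)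
    (h₃ : IsLeftNF k w⁻¹ r₃ zs₃) :
    ∑ i ∈ Finset.range k, (piOf k r₁ zs₁ i - piOf k r₂ zs₂ i) =
      ∑ i ∈ Finset.range k, piOf k r₃ zs₃ i :=
  sum_phi_eq_sum_pi_general k w z r₁ r₂ r₃ zs₁ zs₂ zs₃ h₁ h₂ h₃
end

section
/- Let y be a freely reduced word in the dual generators {σ₁^{±1},…,σ_k^{±1}} of the dihedral Artin group A_k (k ≥ 3). Define P(y) as the maximum length (with the σᵢ having length 1 and δ length 2) of an element of {σ₁,…,σ_k,δ} obtainable as a product of consecutive letters of y, and N(y) analogously for {σ₁⁻¹,…,σ_k⁻¹,δ⁻¹}. Then y is a geodesic word if and only if P(y) + N(y) ≤ 2. -/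
/-- The relations `σᵢσᵢ₊₁ = σ₁σ₂` (indices mod `k`) of the dual presentation. -/
def DualRels (k : ℕ) [NeZero k] : Set (FreeGroup (Fin k)) :=
  {x | ∃ i : Fin k, x = FreeGroup.of i * FreeGroup.of (i + 1) *
    (FreeGroup.of 0 * FreeGroup.of 1)⁻¹}

/-- The dihedral Artin group with its dual presentation
`⟨σ₁,…,σ_k ∣ σ₁σ₂ = σ₂σ₃ = ⋯ = σ_kσ₁⟩`. -/
abbrev DualArtin (k : ℕ) [NeZero k] : Type := PresentedGroup (DualRels k)

/-- The dual generator `σᵢ` (indexed by `Fin k`). -/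
def sig {k : ℕ} [NeZero k] (i : Fin k) : DualArtin k := PresentedGroup.of i

/-- The dual Garside element `δ = σ₁σ₂`. -/
def dualDelta (k : ℕ) [NeZero k] : DualArtin k := sig 0 * sig 1

/-- The dual generating set `{σ₁^{±1},…,σ_k^{±1}}`. -/
def dualGens (k : ℕ) [NeZero k] : Set (DualArtin k) :=
  {x | ∃ i : Fin k, x = sig i ∨ x = (sig i)⁻¹}

/-- A word in the dual generators: `(i, true)` stands for `σᵢ`, `(i, false)` for `σᵢ⁻¹`. -/
def evalWord {k : ℕ} [NeZero k] (y : List (Fin k × Bool)) : DualArtin k :=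
  (y.map fun p => if p.2 then sig p.1 else (sig p.1)⁻¹).prod

/-- A word is freely reduced if no letter is immediately followed by its inverse. -/
def FreelyReduced {k : ℕ} [NeZero k] (y : List (Fin k × Bool)) : Prop :=
  y.Chain' fun p q => ¬(q.1 = p.1 ∧ q.2 = !p.2)

/-- `dualPoss y`: the length of the longest element of `{σ₁,…,σ_k,δ}` (with the `σᵢ`
of length 1 and `δ` of length 2) obtainable as a product of consecutive letters of `y`. -/
noncomputable def dualPoss {k : ℕ} [NeZero k] (y : List (Fin k × Bool)) : ℕ :=
  sSup ({0} ∪ {n | ∃ u : List (Fin k × Bool), u ≠ [] ∧ u.IsInfix y ∧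
    ((n = 1 ∧ ∃ j : Fin k, evalWord u = sig j) ∨ (n = 2 ∧ evalWord u = dualDelta k))})

/-- `dualNegg y`: the analogue of `dualPoss` for `{σ₁⁻¹,…,σ_k⁻¹,δ⁻¹}`. -/
noncomputable def dualNegg {k : ℕ} [NeZero k] (y : List (Fin k × Bool)) : ℕ :=
  sSup ({0} ∪ {n | ∃ u : List (Fin k × Bool), u ≠ [] ∧ u.IsInfix y ∧
    ((n = 1 ∧ ∃ j : Fin k, evalWord u = (sig j)⁻¹) ∨ (n = 2 ∧ evalWord u = (dualDelta k)⁻¹))})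

/-- `y` is a geodesic word: its length equals the word length of the element it represents. -/
def IsGeodesicWord {k : ℕ} [NeZero k] (y : List (Fin k × Bool)) : Prop :=
  wordLength (dualGens k) (evalWord y) = y.length

/-- `w = δ^r w₁⋯wₛ` is a left dual normal form: the `wⱼ` are positive dual generators
and `s` is minimal among all such decompositions. -/
def IsDualLNF {k : ℕ} [NeZero k] (w : DualArtin k) (r : ℤ) (ws : List (DualArtin k)) : Prop :=
  (∀ x ∈ ws, ∃ i : Fin k, x = sig i) ∧ w = dualDelta k ^ r * ws.prod ∧
    ∀ (r' : ℤ) (ws' : List (DualArtin k)), (∀ x ∈ ws', ∃ i : Fin k, x = sig i) →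
      w = dualDelta k ^ r' * ws'.prod → ws.length ≤ ws'.length

/-!
Write `y = y₁uy₂` with `u` evaluating to `δ`. Since `σᵢδ = δσᵢ₊₂`, `δ` moves past any word at
the cost of shifting indices, and `σⱼ⁻¹δ = σⱼ₊₁`, so `δ` is absorbed into any negative letter of
`y₁y₂`; if all negative letters lie in `u`, then `|u| ≥ 4` by the exponent sum and `u` can be
replaced by `σ₀σ₁`. So a word with an infix equal to `δ` and a negative letter is not geodesic,
and inverting words gives the same for `δ⁻¹` and a positive letter. As `P, N ≤ 2`, this is the
forward direction.

Conversely, a word of constant sign is geodesic because the exponent sum bounds the length from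
below. A word with letters of both signs and `P + N ≤ 2` has `P = N = 1`, so it contains neither
`σᵢσᵢ₊₁ = δ` nor `σᵢ₊₁⁻¹σᵢ⁻¹ = δ⁻¹`. The group acts by left multiplication on the pairs
`(r, w)` standing for `δʳw₁⋯wₛ` with no `wⱼwⱼ₊₁ = δ`, every generator changing `s` by one. For a
freely reduced word of that kind no step merges or cancels, so `s = |y|`, which then bounds the
length of every word representing the same element.
-/

theorem List.exists_eq_cons_or_forall_mem_head?_ne {α : Type*} (l : List α) (c : α) :
    (∃ t, l = c :: t) ∨ ∀ a ∈ l.head?, a ≠ c := by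
  rcases l with _ | ⟨a, t⟩
  · simp
  · by_cases h : a = c <;> simp [h]

namespace DualArtin

variable {k : ℕ}

def posCount (y : List (Fin k × Bool)) : ℕ := y.countP fun p => p.2

def negCount (y : List (Fin k × Bool)) : ℕ := y.countP fun p => !p.2

theorem posCount_add_negCount (y : List (Fin k × Bool)) :
    posCount y + negCount y = y.length := by
  simp [posCount, negCount, List.length_eq_countP_add_countP (fun p : Fin k × Bool => p.2)]

theorem posCount_pos_iff {y : List (Fin k × Bool)} : 0 < posCount y ↔ ∃ j, (j, true) ∈ y := by
  simp [posCount, List.countP_pos_iff]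

theorem negCount_pos_iff {y : List (Fin k × Bool)} : 0 < negCount y ↔ ∃ j, (j, false) ∈ y := by
  simp [negCount, List.countP_pos_iff]

theorem posCount_le_of_infix {u y : List (Fin k × Bool)} (h : u <:+: y) :
    posCount u ≤ posCount y :=
  h.sublist.countP_le

theorem negCount_le_of_infix {u y : List (Fin k × Bool)} (h : u <:+: y) :
    negCount u ≤ negCount y :=
  h.sublist.countP_le

@[simp] theorem negCount_append (y z : List (Fin k × Bool)) :
    negCount (y ++ z) = negCount y + negCount z :=
  List.countP_append

def shift (c : Fin k) (y : List (Fin k × Bool)) : List (Fin k × Bool) :=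
  y.map fun p => (p.1 + c, p.2)

@[simp] theorem length_shift (c : Fin k) (y : List (Fin k × Bool)) :
    (shift c y).length = y.length :=
  List.length_map _

@[simp] theorem negCount_shift (c : Fin k) (y : List (Fin k × Bool)) :
    negCount (shift c y) = negCount y := by
  simp [negCount, shift, List.countP_map, Function.comp_def]

def wordInv (y : List (Fin k × Bool)) : List (Fin k × Bool) :=
  (y.map fun p => (p.1, !p.2)).reverse

@[simp] theorem length_wordInv (y : List (Fin k × Bool)) : (wordInv y).length = y.length := by
  simp [wordInv]

@[simp] theorem negCount_wordInv (y : List (Fin k × Bool)) :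
    negCount (wordInv y) = posCount y := by
  simp [negCount, posCount, wordInv, List.countP_map, Function.comp_def]

theorem wordInv_infix {u y : List (Fin k × Bool)} (h : u <:+: y) : wordInv u <:+: wordInv y :=
  List.reverse_infix.mpr (h.map _)

variable [NeZero k]

open Fin.CommRing

theorem sig_mul_sig_add_one (i : Fin k) : sig i * sig (i + 1) = dualDelta k :=
  PresentedGroup.mk_eq_mk_of_mul_inv_mem ⟨i, rfl⟩

theorem sig_mul_dualDelta (i : Fin k) : sig i * dualDelta k = dualDelta k * sig (i + 2) := by
  conv_lhs => rw [← sig_mul_sig_add_one (i + 1), ← mul_assoc, sig_mul_sig_add_one]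
  rw [add_assoc, one_add_one_eq_two]

theorem inv_sig_mul_dualDelta (i : Fin k) : (sig i)⁻¹ * dualDelta k = sig (i + 1) := by
  rw [← sig_mul_sig_add_one i, inv_mul_cancel_left]

theorem inv_sig_mul_dualDelta_comm (i : Fin k) :
    (sig i)⁻¹ * dualDelta k = dualDelta k * (sig (i + 2))⁻¹ := by
  rw [inv_mul_eq_iff_eq_mul, ← mul_assoc, sig_mul_dualDelta, mul_inv_cancel_right]

def letter (p : Fin k × Bool) : DualArtin k := if p.2 then sig p.1 else (sig p.1)⁻¹

@[simp] theorem letter_true (i : Fin k) : letter (i, true) = sig i := rfl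

@[simp] theorem letter_false (i : Fin k) : letter (i, false) = (sig i)⁻¹ := rfl

theorem letter_inv (p : Fin k × Bool) : letter (p.1, !p.2) = (letter p)⁻¹ := by
  rcases p with ⟨i, _ | _⟩ <;> simp

theorem letter_mul_dualDelta (p : Fin k × Bool) :
    letter p * dualDelta k = dualDelta k * letter (p.1 + 2, p.2) := by
  rcases p with ⟨i, _ | _⟩
  · exact inv_sig_mul_dualDelta_comm i
  · exact sig_mul_dualDelta i

@[simp] theorem evalWord_nil : evalWord ([] : List (Fin k × Bool)) = 1 := rfl

@[simp] theorem evalWord_cons (p : Fin k × Bool) (y : List (Fin k × Bool)) :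
    evalWord (p :: y) = letter p * evalWord y :=
  List.prod_cons

@[simp] theorem evalWord_append (y z : List (Fin k × Bool)) :
    evalWord (y ++ z) = evalWord y * evalWord z := by
  simp [evalWord]

theorem evalWord_mul_dualDelta (y : List (Fin k × Bool)) :
    evalWord y * dualDelta k = dualDelta k * evalWord (shift 2 y) := by
  induction y with
  | nil => simp [shift]
  | cons p y ih =>
    rw [evalWord_cons, mul_assoc, ih, ← mul_assoc, letter_mul_dualDelta, mul_assoc]
    rfl

theorem dualDelta_mul_evalWord (y : List (Fin k × Bool)) :
    dualDelta k * evalWord y = evalWord (shift (-2) y) * dualDelta k := by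
  rw [evalWord_mul_dualDelta]
  simp [shift, Function.comp_def]

theorem exists_evalWord_eq_mul_dualDelta {w : List (Fin k × Bool)} (hw : 0 < negCount w) :
    ∃ w' : List (Fin k × Bool), w'.length = w.length ∧
      evalWord w' = evalWord w * dualDelta k := by
  obtain ⟨j, hj⟩ := negCount_pos_iff.mp hw
  obtain ⟨z₁, z₂, rfl⟩ := List.mem_iff_append.mp hj
  refine ⟨z₁ ++ (j + 1, true) :: shift 2 z₂, by simp, ?_⟩
  simp only [evalWord_append, evalWord_cons, letter_true, letter_false, mul_assoc,
    evalWord_mul_dualDelta, ← inv_sig_mul_dualDelta]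

theorem evalWord_wordInv (y : List (Fin k × Bool)) : evalWord (wordInv y) = (evalWord y)⁻¹ := by
  induction y with
  | nil => rfl
  | cons p y ih => simp [wordInv, ← ih, letter_inv]

noncomputable def expSum : DualArtin k →* Multiplicative ℤ :=
  PresentedGroup.toGroup (f := fun _ => Multiplicative.ofAdd 1) <| by
    rintro _ ⟨i, rfl⟩
    simp

@[simp] theorem toAdd_expSum_sig (i : Fin k) : (expSum (sig i)).toAdd = 1 := by
  simp [expSum, sig]

@[simp] theorem toAdd_expSum_dualDelta : (expSum (dualDelta k)).toAdd = 2 := by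
  simp [dualDelta]

@[simp] theorem toAdd_expSum_evalWord (y : List (Fin k × Bool)) :
    (expSum (evalWord y)).toAdd = (posCount y : ℤ) - negCount y := by
  induction y with
  | nil => simp [posCount, negCount]
  | cons p y ih => rcases p with ⟨i, _ | _⟩ <;> simp [ih, posCount, negCount] <;> ring

/-- `⟨r, l, _⟩` stands for `δʳσ_{l₁}⋯σ_{lₛ}`. -/
@[ext] structure NormalForm (k : ℕ) [NeZero k] where
  r : ℤ
  l : List (Fin k)
  chain : l.IsChain fun a b => b ≠ a + 1

namespace NormalForm

/-- `σᵢδʳ = δʳσ_{twist i r}`. -/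
def twist (i : Fin k) (r : ℤ) : Fin k := i + r • 2

theorem twist_add_one (i : Fin k) (r : ℤ) : twist (i + 1) r = twist i r + 1 := by
  unfold twist; abel

theorem twist_add_one_right (i : Fin k) (r : ℤ) : twist i (r + 1) = twist i r + 2 := by
  simp only [twist, add_smul, one_smul]; abel

theorem twist_sub_one_right (i : Fin k) (r : ℤ) : twist i (r - 1) + 1 = twist i r - 1 := by
  simp only [twist, sub_smul, one_smul]; ring

def sigMul (i : Fin k) : NormalForm k → NormalForm k
  | ⟨r, [], _⟩ => ⟨r, [twist i r], .singleton _⟩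
  | ⟨r, a :: l, h⟩ =>
    if ha : a = twist i r + 1 then ⟨r + 1, l, (List.isChain_cons.mp h).2⟩
    else ⟨r, twist i r :: a :: l, List.isChain_cons_cons.mpr ⟨ha, h⟩⟩

def sigInvMul (i : Fin k) : NormalForm k → NormalForm k
  | ⟨r, [], _⟩ => ⟨r - 1, [twist i r - 1], .singleton _⟩
  | ⟨r, a :: l, h⟩ =>
    if ha : a = twist i r then ⟨r, l, (List.isChain_cons.mp h).2⟩
    else ⟨r - 1, (twist i r - 1) :: a :: l,
      List.isChain_cons_cons.mpr ⟨by rwa [sub_add_cancel], h⟩⟩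

variable {i : Fin k} {x : NormalForm k} {t : List (Fin k)}

theorem sigMul_of_eq (h : x.l = (twist i x.r + 1) :: t) :
    (sigMul i x).r = x.r + 1 ∧ (sigMul i x).l = t := by
  obtain ⟨r, l, _⟩ := x
  dsimp only at h
  subst h
  simp [sigMul]

theorem sigMul_of_ne (h : ∀ a ∈ x.l.head?, a ≠ twist i x.r + 1) :
    (sigMul i x).r = x.r ∧ (sigMul i x).l = twist i x.r :: x.l := by
  obtain ⟨r, _ | ⟨a, l⟩, _⟩ := x
  · simp [sigMul]
  · simp_all [sigMul]

theorem sigInvMul_of_eq (h : x.l = twist i x.r :: t) :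
    (sigInvMul i x).r = x.r ∧ (sigInvMul i x).l = t := by
  obtain ⟨r, l, _⟩ := x
  dsimp only at h
  subst h
  simp [sigInvMul]

theorem sigInvMul_of_ne (h : ∀ a ∈ x.l.head?, a ≠ twist i x.r) :
    (sigInvMul i x).r = x.r - 1 ∧ (sigInvMul i x).l = (twist i x.r - 1) :: x.l := by
  obtain ⟨r, _ | ⟨a, l⟩, _⟩ := x
  · simp [sigInvMul]
  · simp_all [sigInvMul]

theorem forall_mem_head?_ne_of_eq_cons {c : Fin k} (h : x.l = c :: t) :
    ∀ a ∈ t.head?, a ≠ c + 1 :=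
  (List.isChain_cons.mp (h ▸ x.chain)).1

theorem sigInvMul_sigMul (i : Fin k) (x : NormalForm k) : sigInvMul i (sigMul i x) = x := by
  rcases x.l.exists_eq_cons_or_forall_mem_head?_ne (twist i x.r + 1) with ⟨t, ht⟩ | ht
  · obtain ⟨hr, hl⟩ := sigMul_of_eq ht
    have hne : ∀ a ∈ (sigMul i x).l.head?, a ≠ twist i (sigMul i x).r := by
      rw [hl, hr, twist_add_one_right, ← one_add_one_eq_two, ← add_assoc]
      exact forall_mem_head?_ne_of_eq_cons ht
    obtain ⟨hr', hl'⟩ := sigInvMul_of_ne hne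
    ext1
    · rw [hr', hr, add_sub_cancel_right]
    · rw [hl', ht, hl, hr, twist_add_one_right]; congr 1; ring
  · obtain ⟨hr, hl⟩ := sigMul_of_ne ht
    obtain ⟨hr', hl'⟩ := sigInvMul_of_eq (hl.trans (by rw [hr]))
    ext1
    · rw [hr', hr]
    · exact hl'

theorem sigMul_sigInvMul (i : Fin k) (x : NormalForm k) : sigMul i (sigInvMul i x) = x := by
  rcases x.l.exists_eq_cons_or_forall_mem_head?_ne (twist i x.r) with ⟨t, ht⟩ | ht
  · obtain ⟨hr, hl⟩ := sigInvMul_of_eq ht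
    have hne : ∀ a ∈ (sigInvMul i x).l.head?, a ≠ twist i (sigInvMul i x).r + 1 := by
      rw [hl, hr]
      exact forall_mem_head?_ne_of_eq_cons ht
    obtain ⟨hr', hl'⟩ := sigMul_of_ne hne
    ext1
    · rw [hr', hr]
    · rw [hl', hl, hr, ht]
  · obtain ⟨hr, hl⟩ := sigInvMul_of_ne ht
    obtain ⟨hr', hl'⟩ := sigMul_of_eq (hl.trans (by rw [hr, twist_sub_one_right]))
    ext1
    · rw [hr', hr, sub_add_cancel]
    · exact hl'

theorem sigMul_sigMul_add_one (i : Fin k) (x : NormalForm k) :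
    sigMul i (sigMul (i + 1) x) = ⟨x.r + 1, x.l, x.chain⟩ := by
  rcases x.l.exists_eq_cons_or_forall_mem_head?_ne (twist (i + 1) x.r + 1) with ⟨t, ht⟩ | ht
  · obtain ⟨hr, hl⟩ := sigMul_of_eq ht
    have hne : ∀ a ∈ (sigMul (i + 1) x).l.head?, a ≠ twist i (sigMul (i + 1) x).r + 1 := by
      have : twist i (x.r + 1) + 1 = twist (i + 1) x.r + 1 + 1 := by
        rw [twist_add_one, twist_add_one_right]; ring
      rw [hl, hr, this]
      exact forall_mem_head?_ne_of_eq_cons ht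
    obtain ⟨hr', hl'⟩ := sigMul_of_ne hne
    ext1
    · rw [hr', hr]
    · rw [hl', hl, hr, ht, twist_add_one_right, twist_add_one]; congr 1; ring
  · obtain ⟨hr, hl⟩ := sigMul_of_ne ht
    obtain ⟨hr', hl'⟩ := sigMul_of_eq (i := i) (hl.trans (by rw [hr, twist_add_one]))
    ext1
    · rw [hr', hr]
    · exact hl'

theorem length_sigMul_le (i : Fin k) (x : NormalForm k) :
    (sigMul i x).l.length ≤ x.l.length + 1 := by
  rcases x.l.exists_eq_cons_or_forall_mem_head?_ne (twist i x.r + 1) with ⟨t, ht⟩ | ht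
  · simp only [(sigMul_of_eq ht).2, ht, List.length_cons]; omega
  · simp [(sigMul_of_ne ht).2]

theorem length_sigInvMul_le (i : Fin k) (x : NormalForm k) :
    (sigInvMul i x).l.length ≤ x.l.length + 1 := by
  rcases x.l.exists_eq_cons_or_forall_mem_head?_ne (twist i x.r) with ⟨t, ht⟩ | ht
  · simp only [(sigInvMul_of_eq ht).2, ht, List.length_cons]; omega
  · simp [(sigInvMul_of_ne ht).2]

def sigPerm (i : Fin k) : Equiv.Perm (NormalForm k) :=
  ⟨sigMul i, sigInvMul i, sigInvMul_sigMul i, sigMul_sigInvMul i⟩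

def base : NormalForm k := ⟨0, [], .nil⟩

end NormalForm

open NormalForm

noncomputable def act : DualArtin k →* Equiv.Perm (NormalForm k) :=
  PresentedGroup.toGroup (f := sigPerm) <| by
    rintro _ ⟨i, rfl⟩
    rw [map_mul, map_inv, map_mul, map_mul, mul_inv_eq_one]
    ext1 x
    have h := sigMul_sigMul_add_one 0 x
    rw [zero_add] at h
    exact (sigMul_sigMul_add_one i x).trans h.symm

@[simp] theorem act_sig_apply (i : Fin k) (x : NormalForm k) : act (sig i) x = sigMul i x := by
  simp [act, sig, sigPerm]

@[simp] theorem act_sig_symm_apply (i : Fin k) (x : NormalForm k) :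
    (act (sig i)).symm x = sigInvMul i x := by
  simp [act, sig, sigPerm]

noncomputable def normalForm (g : DualArtin k) : NormalForm k := act g base

theorem normalForm_evalWord_cons (p : Fin k × Bool) (y : List (Fin k × Bool)) :
    normalForm (evalWord (p :: y)) = act (letter p) (normalForm (evalWord y)) := by
  simp [normalForm]

theorem length_l_normalForm_evalWord_le (y : List (Fin k × Bool)) :
    (normalForm (evalWord y)).l.length ≤ y.length := by
  induction y with
  | nil => simp [normalForm, base]
  | cons p y ih =>
    rw [normalForm_evalWord_cons, List.length_cons]
    rcases p with ⟨i, _ | _⟩ <;> simp only [letter_false, letter_true, map_inv,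
      Equiv.Perm.inv_def, act_sig_apply, act_sig_symm_apply]
    · exact (length_sigInvMul_le i _).trans (by omega)
    · exact (length_sigMul_le i _).trans (by omega)

/- Since `σᵢ⁻¹ = σᵢ₊₁δ⁻¹`, the letter `p` contributes the generator of index `headIdx p` (twisted
by the power of `δ`) to the normal form, and it merges with a following generator of index
`mergeIdx p` (`σᵢσᵢ₊₁ = δ`, `σᵢ⁻¹σᵢ = 1`). -/
def headIdx (p : Fin k × Bool) : Fin k := if p.2 then p.1 else p.1 + 1

def mergeIdx (p : Fin k × Bool) : Fin k := if p.2 then p.1 + 1 else p.1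

theorem l_act_letter_of_ne (p : Fin k × Bool) {x : NormalForm k}
    (h : ∀ a ∈ x.l.head?, a ≠ twist (mergeIdx p) x.r) :
    (act (letter p) x).l = twist (headIdx p) (act (letter p) x).r :: x.l := by
  rcases p with ⟨i, _ | _⟩
  · obtain ⟨hr, hl⟩ := sigInvMul_of_ne (i := i) h
    simp [headIdx, hl, hr, twist_add_one, twist_sub_one_right]
  · obtain ⟨hr, hl⟩ := sigMul_of_ne (i := i) (by simpa [mergeIdx, twist_add_one] using h)
    simp [headIdx, hl, hr]

theorem length_l_normalForm_evalWord_of_isChain {y : List (Fin k × Bool)}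
    (hy : y.IsChain fun p q => headIdx q ≠ mergeIdx p) :
    (normalForm (evalWord y)).l.length = y.length ∧ (normalForm (evalWord y)).l.head? =
      y.head?.map fun p => twist (headIdx p) (normalForm (evalWord y)).r := by
  induction y with
  | nil => simp [normalForm, base]
  | cons p y ih =>
    obtain ⟨hp, hy⟩ := List.isChain_cons.mp hy
    obtain ⟨hlen, hhead⟩ := ih hy
    have hne : ∀ a ∈ (normalForm (evalWord y)).l.head?,
        a ≠ twist (mergeIdx p) (normalForm (evalWord y)).r := by
      intro a ha heq
      obtain ⟨q, hq, rfl⟩ := Option.mem_map.mp (hhead ▸ ha)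
      exact hp q hq (add_left_injective _ heq)
    rw [normalForm_evalWord_cons, l_act_letter_of_ne p hne]
    simp [hlen]


theorem letter_mem_dualGens (p : Fin k × Bool) : letter p ∈ dualGens k := by
  rcases p with ⟨i, _ | _⟩
  · exact ⟨i, Or.inr rfl⟩
  · exact ⟨i, Or.inl rfl⟩

theorem exists_evalWord_eq_prod {l : List (DualArtin k)} (hl : ∀ g ∈ l, g ∈ dualGens k) :
    ∃ y : List (Fin k × Bool), y.length = l.length ∧ evalWord y = l.prod := by
  induction l with
  | nil => exact ⟨[], rfl, rfl⟩
  | cons g l ih =>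
    obtain ⟨y, hlen, hev⟩ := ih fun g hg => hl g (List.mem_cons_of_mem _ hg)
    obtain ⟨i, rfl | rfl⟩ := hl g List.mem_cons_self
    · exact ⟨(i, true) :: y, by simp [hlen], by simp [hev]⟩
    · exact ⟨(i, false) :: y, by simp [hlen], by simp [hev]⟩

theorem wordLength_evalWord_le (y : List (Fin k × Bool)) :
    wordLength (dualGens k) (evalWord y) ≤ y.length :=
  Nat.sInf_le ⟨y.map letter, List.length_map _,
    List.forall_mem_map.mpr fun p _ => letter_mem_dualGens p, rfl⟩

theorem isGeodesicWord_iff {y : List (Fin k × Bool)} :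
    IsGeodesicWord y ↔ ∀ y', evalWord y' = evalWord y → y.length ≤ y'.length := by
  refine ⟨fun hy y' h => hy ▸ h ▸ wordLength_evalWord_le y', fun h => ?_⟩
  refine (wordLength_evalWord_le y).antisymm (le_csInf ?_ ?_)
  · exact ⟨_, y.map letter, rfl, List.forall_mem_map.mpr fun p _ => letter_mem_dualGens p, rfl⟩
  · rintro n ⟨l, rfl, hl, hprod⟩
    obtain ⟨y', hlen, hev⟩ := exists_evalWord_eq_prod hl
    exact hlen ▸ h y' (hev.trans hprod)

theorem not_isGeodesicWord_of_shorter {y z : List (Fin k × Bool)}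
    (h : evalWord z = evalWord y) (hlt : z.length < y.length) : ¬IsGeodesicWord y :=
  fun hy => (isGeodesicWord_iff.mp hy z h).not_gt hlt

theorem IsGeodesicWord.wordInv {y : List (Fin k × Bool)} (hy : IsGeodesicWord y) :
    IsGeodesicWord (wordInv y) :=
  isGeodesicWord_iff.mpr fun y' h => by
    have := isGeodesicWord_iff.mp hy (DualArtin.wordInv y')
      (by rw [evalWord_wordInv, h, evalWord_wordInv, inv_inv])
    simpa using this

/-- `dualPoss y` and `dualNegg y` unfold to `infixWeight y sig δ` and
`infixWeight y (fun j => (sig j)⁻¹) δ⁻¹`. -/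
noncomputable def infixWeight (y : List (Fin k × Bool)) (s : Fin k → DualArtin k)
    (d : DualArtin k) : ℕ :=
  sSup ({0} ∪ {n | ∃ u : List (Fin k × Bool), u ≠ [] ∧ u.IsInfix y ∧
    ((n = 1 ∧ ∃ j : Fin k, evalWord u = s j) ∨ (n = 2 ∧ evalWord u = d))})

section infixWeight

variable {y : List (Fin k × Bool)} {s : Fin k → DualArtin k} {d : DualArtin k}

theorem infixWeight_le_two : infixWeight y s d ≤ 2 :=
  csSup_le ⟨0, Or.inl rfl⟩ <| by rintro n (rfl | ⟨u, -, -, ⟨rfl, -⟩ | ⟨rfl, -⟩⟩) <;> norm_num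

theorem lt_infixWeight_iff {m : ℕ} :
    m < infixWeight y s d ↔ ∃ u : List (Fin k × Bool), u ≠ [] ∧ u.IsInfix y ∧
      ((m < 1 ∧ ∃ j : Fin k, evalWord u = s j) ∨ (m < 2 ∧ evalWord u = d)) := by
  rw [infixWeight, lt_csSup_iff' ⟨2, fun n hn => ?_⟩]
  · constructor
    · rintro ⟨n, rfl | ⟨u, hu, hinf, ⟨rfl, hs⟩ | ⟨rfl, hd⟩⟩, hmn⟩
      · omega
      · exact ⟨u, hu, hinf, Or.inl ⟨hmn, hs⟩⟩
      · exact ⟨u, hu, hinf, Or.inr ⟨hmn, hd⟩⟩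
    · rintro ⟨u, hu, hinf, ⟨hm, hs⟩ | ⟨hm, hd⟩⟩
      · exact ⟨1, Or.inr ⟨u, hu, hinf, Or.inl ⟨rfl, hs⟩⟩, hm⟩
      · exact ⟨2, Or.inr ⟨u, hu, hinf, Or.inr ⟨rfl, hd⟩⟩, hm⟩
  · rcases hn with rfl | ⟨u, -, -, ⟨rfl, -⟩ | ⟨rfl, -⟩⟩ <;> norm_num

theorem one_lt_infixWeight_iff :
    1 < infixWeight y s d ↔ ∃ u : List (Fin k × Bool), u ≠ [] ∧ u.IsInfix y ∧ evalWord u = d := by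
  simp [lt_infixWeight_iff]

end infixWeight

theorem dualPoss_pos_iff {y : List (Fin k × Bool)} : 0 < dualPoss y ↔ 0 < posCount y := by
  refine ⟨fun h => ?_, fun h => ?_⟩
  · obtain ⟨u, -, hinf, ⟨-, j, hu⟩ | ⟨-, hu⟩⟩ := lt_infixWeight_iff.mp h <;>
    · have hsum := congrArg (fun g => (expSum g).toAdd) hu
      simp only [toAdd_expSum_evalWord, toAdd_expSum_sig, toAdd_expSum_dualDelta] at hsum
      have := posCount_le_of_infix hinf
      omega
  · obtain ⟨j, hj⟩ := posCount_pos_iff.mp h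
    exact lt_infixWeight_iff.mpr ⟨[(j, true)], by simp, (List.singleton_infix_iff _ _).mpr hj,
      Or.inl ⟨one_pos, j, by simp⟩⟩

theorem dualNegg_pos_iff {y : List (Fin k × Bool)} : 0 < dualNegg y ↔ 0 < negCount y := by
  refine ⟨fun h => ?_, fun h => ?_⟩
  · obtain ⟨u, -, hinf, ⟨-, j, hu⟩ | ⟨-, hu⟩⟩ := lt_infixWeight_iff.mp h <;>
    · have hsum := congrArg (fun g => (expSum g).toAdd) hu
      simp only [toAdd_expSum_evalWord, map_inv, toAdd_inv, toAdd_expSum_sig,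
        toAdd_expSum_dualDelta] at hsum
      have := negCount_le_of_infix hinf
      omega
  · obtain ⟨j, hj⟩ := negCount_pos_iff.mp h
    exact lt_infixWeight_iff.mpr ⟨[(j, false)], by simp, (List.singleton_infix_iff _ _).mpr hj,
      Or.inl ⟨one_pos, j, by simp⟩⟩

theorem isChain_headIdx_ne_mergeIdx {y : List (Fin k × Bool)} (hy : FreelyReduced y)
    (hP : dualPoss y ≤ 1) (hN : dualNegg y ≤ 1) :
    y.IsChain fun p q => headIdx q ≠ mergeIdx p := by
  rw [List.isChain_iff_forall_rel_of_append_cons_cons]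
  rintro ⟨i, b⟩ ⟨j, c⟩ l₁ l₂ rfl heq
  have hinf : [(i, b), (j, c)] <:+: l₁ ++ (i, b) :: (j, c) :: l₂ := ⟨l₁, l₂, by simp⟩
  have hred := List.isChain_iff_forall_rel_of_append_cons_cons.mp hy rfl
  cases b <;> cases c <;> simp only [headIdx, mergeIdx] at heq hred <;> simp at heq hred
  · subst heq
    refine hN.not_gt (one_lt_infixWeight_iff.mpr ⟨_, by simp, hinf, ?_⟩)
    simp [← mul_inv_rev, sig_mul_sig_add_one]
  · exact hred heq
  · exact hred heq
  · subst heq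
    exact hP.not_gt (one_lt_infixWeight_iff.mpr ⟨_, by simp, hinf, by simp [sig_mul_sig_add_one]⟩)

theorem not_isGeodesicWord_of_infix_dualDelta {u y : List (Fin k × Bool)} (hu : u <:+: y)
    (hδ : evalWord u = dualDelta k) (hy : 0 < negCount y) : ¬IsGeodesicWord y := by
  obtain ⟨y₁, y₂, rfl⟩ := hu
  have hsum : (posCount u : ℤ) - negCount u = 2 := by
    simpa using congrArg (fun g => (expSum g).toAdd) hδ
  have hlen := posCount_add_negCount u
  set w := y₁ ++ shift (-2) y₂
  have hw : evalWord (y₁ ++ u ++ y₂) = evalWord w * dualDelta k := by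
    simp only [w, evalWord_append, hδ, mul_assoc, dualDelta_mul_evalWord]
  have hneg : negCount (y₁ ++ u ++ y₂) = negCount w + negCount u := by
    simp only [w, negCount_append, negCount_shift]
    omega
  rcases Nat.eq_zero_or_pos (negCount w) with hw0 | hwpos
  -- all negative letters lie in `u`, so `|u| ≥ 4`
  · refine not_isGeodesicWord_of_shorter (z := w ++ [(0, true), (1, true)]) ?_ ?_
    · rw [hw]
      simp [dualDelta]
    · simp only [List.length_append, List.length_cons, List.length_nil, w, length_shift]
      omega
  · obtain ⟨w', hlen, hev⟩ := exists_evalWord_eq_mul_dualDelta hwpos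
    refine not_isGeodesicWord_of_shorter (hev.trans hw.symm) ?_
    simp only [hlen, List.length_append, w, length_shift]
    omega

theorem not_isGeodesicWord_of_infix_inv_dualDelta {u y : List (Fin k × Bool)} (hu : u <:+: y)
    (hδ : evalWord u = (dualDelta k)⁻¹) (hy : 0 < posCount y) : ¬IsGeodesicWord y :=
  fun hgeo => not_isGeodesicWord_of_infix_dualDelta (wordInv_infix hu)
    (by rw [evalWord_wordInv, hδ, inv_inv]) (by rwa [negCount_wordInv])
    (IsGeodesicWord.wordInv hgeo)

theorem isGeodesicWord_of_posCount_eq_zero_or_negCount_eq_zero {y : List (Fin k × Bool)}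
    (hy : posCount y = 0 ∨ negCount y = 0) : IsGeodesicWord y :=
  isGeodesicWord_iff.mpr fun y' h => by
    have hsum := congrArg (fun g => (expSum g).toAdd) h
    simp only [toAdd_expSum_evalWord] at hsum
    have := posCount_add_negCount y
    have := posCount_add_negCount y'
    omega

theorem isGeodesicWord_of_isChain {y : List (Fin k × Bool)}
    (hy : y.IsChain fun p q => headIdx q ≠ mergeIdx p) : IsGeodesicWord y :=
  isGeodesicWord_iff.mpr fun y' h =>
    calc y.length = (normalForm (evalWord y)).l.length :=
          (length_l_normalForm_evalWord_of_isChain hy).1.symm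
      _ = (normalForm (evalWord y')).l.length := by rw [h]
      _ ≤ y'.length := length_l_normalForm_evalWord_le y'

end DualArtin

open DualArtin

theorem dual_geodesic_criterion_general (k : ℕ) [NeZero k]
    (y : List (Fin k × Bool)) (hy : FreelyReduced y) :
    IsGeodesicWord y ↔ dualPoss y + dualNegg y ≤ 2 := by
  have hP : dualPoss y ≤ 2 := infixWeight_le_two
  have hN : dualNegg y ≤ 2 := infixWeight_le_two
  constructor
  · intro hgeo
    by_contra! h
    rcases (by omega : (1 < dualPoss y ∧ 0 < dualNegg y) ∨ (1 < dualNegg y ∧ 0 < dualPoss y))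
      with ⟨hP, hN⟩ | ⟨hN, hP⟩
    · obtain ⟨u, -, hu, hδ⟩ := one_lt_infixWeight_iff.mp hP
      exact not_isGeodesicWord_of_infix_dualDelta hu hδ (dualNegg_pos_iff.mp hN) hgeo
    · obtain ⟨u, -, hu, hδ⟩ := one_lt_infixWeight_iff.mp hN
      exact not_isGeodesicWord_of_infix_inv_dualDelta hu hδ (dualPoss_pos_iff.mp hP) hgeo
  · intro h
    by_cases hsign : posCount y = 0 ∨ negCount y = 0
    · exact isGeodesicWord_of_posCount_eq_zero_or_negCount_eq_zero hsign
    have hP1 := dualPoss_pos_iff (y := y) |>.mpr (by omega)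
    have hN1 := dualNegg_pos_iff (y := y) |>.mpr (by omega)
    exact isGeodesicWord_of_isChain (isChain_headIdx_ne_mergeIdx hy (by omega) (by omega))

theorem dual_geodesic_criterion (k : ℕ) [NeZero k] (hk : 3 ≤ k)
    (y : List (Fin k × Bool)) (hy : FreelyReduced y) :
    IsGeodesicWord y ↔ dualPoss y + dualNegg y ≤ 2 :=
  dual_geodesic_criterion_general k y hy
end

section
/- In the dihedral Artin group A_k with dual generators, if y is a freely reduced word with P(y) = N(y) = 1 (no two consecutive letters multiply to δ or δ⁻¹), then as the letters of y are multiplied successively starting from the identity, at each step the quantity |r| + |r+s| increases by exactly 1, where δʳ w₁⋯wₛ is the left dual normal form of the current prefix; consequently d(e, y₁⋯yₙ) = n for every prefix. -/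
section
variable {G : Type*} [Group G] {S : Set G}

theorem wordLength_prod_le {l : List G} (hl : ∀ g ∈ l, g ∈ S) :
    wordLength S l.prod ≤ l.length :=
  Nat.sInf_le ⟨l, rfl, hl, rfl⟩

theorem le_length_of_mul_le_add_one {f : G → ℕ} (hf₁ : f 1 = 0)
    (hf : ∀ w, ∀ g ∈ S, f (w * g) ≤ f w + 1) {l : List G} (hl : ∀ g ∈ l, g ∈ S) :
    f l.prod ≤ l.length := by
  induction l using List.reverseRecOn with
  | nil => simp [hf₁]
  | append_singleton l g ih =>
    simp only [List.forall_mem_append, List.forall_mem_singleton] at hl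
    rw [List.prod_append, List.prod_singleton, List.length_append, List.length_singleton]
    exact (hf _ g hl.2).trans (Nat.add_le_add_right (ih hl.1) 1)

theorem wordLength_prod_eq_length {f : G → ℕ} (hf₁ : f 1 = 0)
    (hf : ∀ w, ∀ g ∈ S, f (w * g) ≤ f w + 1) {l : List G} (hl : ∀ g ∈ l, g ∈ S)
    (hfl : f l.prod = l.length) : wordLength S l.prod = l.length := by
  refine (wordLength_prod_le hl).antisymm (le_csInf ⟨_, l, rfl, hl, rfl⟩ ?_)
  rintro _ ⟨l', rfl, hl', hprod⟩
  rw [← hfl, ← hprod]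
  exact le_length_of_mul_le_add_one hf₁ hf hl'

end

section
variable {k : ℕ} [NeZero k]

lemma sig_mul_sig_add_one (i : Fin k) : sig i * sig (i + 1) = dualDelta k :=
  PresentedGroup.mk_eq_mk_of_mul_inv_mem ⟨i, rfl⟩

lemma sig_sub_one_mul_sig (j : Fin k) : sig (j - 1) * sig j = dualDelta k := by
  rw [← sig_mul_sig_add_one (j - 1), sub_add_cancel]

lemma inv_sig_eq (j : Fin k) : (sig j)⁻¹ = (dualDelta k)⁻¹ * sig (j - 1) := by
  rw [← sig_sub_one_mul_sig j]
  group

lemma dualDelta_mul_sig_add_two (i : Fin k) :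
    dualDelta k * sig (i + 2) = sig i * dualDelta k := by
  conv_rhs => rw [← sig_mul_sig_add_one (i + 1), show i + 1 + 1 = i + 2 by grind]
  rw [← sig_mul_sig_add_one i, mul_assoc]

@[elab_as_elim]
theorem DualArtin.induction_on_mul_right {P : DualArtin k → Prop} (w : DualArtin k)
    (one : P 1) (mul_sig : ∀ w j, P w → P (w * sig j))
    (mul_sig_inv : ∀ w j, P w → P (w * (sig j)⁻¹)) : P w := by
  have hw : w ∈ Subgroup.closure (Set.range (PresentedGroup.of (rels := DualRels k))) := by
    simp
  induction hw using Subgroup.closure_induction_right with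
  | one => exact one
  | mul_right x _ _ hy h => obtain ⟨j, rfl⟩ := hy; exact mul_sig x j h
  | mul_inv_cancel x _ _ hy h => obtain ⟨j, rfl⟩ := hy; exact mul_sig_inv x j h

def stackWord (l : List (Fin k)) : DualArtin k := (l.reverse.map sig).prod

/-- `(r, [aₛ, …, a₁])` stands for `δ^r σ_{a₁} ⋯ σ_{aₛ}`: the positive part is stored as a stack,
last letter first. -/
def stackEval (p : ℤ × List (Fin k)) : DualArtin k := dualDelta k ^ p.1 * stackWord p.2

@[simp] lemma stackWord_nil : stackWord ([] : List (Fin k)) = 1 := rfl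

@[simp] lemma stackWord_cons (a : Fin k) (l : List (Fin k)) :
    stackWord (a :: l) = stackWord l * sig a := by
  simp [stackWord]

lemma dualDelta_mul_stackWord_map_add_two (l : List (Fin k)) :
    dualDelta k * stackWord (l.map (· + 2)) = stackWord l * dualDelta k := by
  induction l with
  | nil => simp
  | cons a l ih =>
    rw [List.map_cons, stackWord_cons, stackWord_cons, ← mul_assoc, ih, mul_assoc,
      dualDelta_mul_sig_add_two, ← mul_assoc]

lemma stackWord_map_sub_two (l : List (Fin k)) :
    stackWord (l.map (· - 2)) = dualDelta k * stackWord l * (dualDelta k)⁻¹ := by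
  rw [eq_mul_inv_iff_mul_eq, ← dualDelta_mul_stackWord_map_add_two, List.map_map]
  simp [Function.comp_def]

/-- Right multiplication by `σⱼ`: a top letter `σⱼ₋₁` merges with it into `δ`, which moves to
the front, shifting the indices of the letters it passes by `2`. -/
def stackMulSig (j : Fin k) (p : ℤ × List (Fin k)) : ℤ × List (Fin k) :=
  if p.2.head? = some (j - 1) then (p.1 + 1, p.2.tail.map (· + 2)) else (p.1, j :: p.2)

/-- Right multiplication by `σⱼ⁻¹ = δ⁻¹σⱼ₋₁`. -/
def stackMulSigInv (j : Fin k) (p : ℤ × List (Fin k)) : ℤ × List (Fin k) :=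
  if p.2.head? = some j then (p.1, p.2.tail) else (p.1 - 1, (j - 1) :: p.2.map (· - 2))

lemma stackEval_stackMulSig (j : Fin k) (p : ℤ × List (Fin k)) :
    stackEval (stackMulSig j p) = stackEval p * sig j := by
  obtain ⟨r, _ | ⟨a, l⟩⟩ := p
  · simp [stackMulSig, stackEval]
  · by_cases ha : a = j - 1
    · simp only [stackMulSig, stackEval, ha, List.head?_cons, if_true, List.tail_cons,
        stackWord_cons]
      rw [zpow_add_one, mul_assoc, dualDelta_mul_stackWord_map_add_two, mul_assoc, mul_assoc,
        sig_sub_one_mul_sig]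
    · simp [stackMulSig, stackEval, ha, mul_assoc]

lemma stackEval_stackMulSigInv (j : Fin k) (p : ℤ × List (Fin k)) :
    stackEval (stackMulSigInv j p) = stackEval p * (sig j)⁻¹ := by
  obtain ⟨r, l⟩ := p
  by_cases ha : l.head? = some j
  · obtain ⟨l, rfl⟩ : ∃ t, l = j :: t := by
      cases l <;> simp_all
    simp [stackMulSigInv, stackEval, mul_assoc]
  · simp only [stackMulSigInv, stackEval, ha, if_false, stackWord_cons, stackWord_map_sub_two]
    rw [zpow_sub_one, inv_sig_eq]
    group

/-- On a stack (last letter first) this says that no two consecutive letters multiply to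
`σᵢσᵢ₊₁ = δ`. -/
def IsDeltaFree (l : List (Fin k)) : Prop := l.IsChain fun a b => a ≠ b + 1

lemma IsDeltaFree.map_add {l : List (Fin k)} (h : IsDeltaFree l) (d : Fin k) :
    IsDeltaFree (l.map (· + d)) :=
  List.isChain_map _ |>.mpr <| h.imp fun a b hab h' => hab (by grind)

lemma IsDeltaFree.map_sub {l : List (Fin k)} (h : IsDeltaFree l) (d : Fin k) :
    IsDeltaFree (l.map (· - d)) := by
  simpa [sub_eq_add_neg] using h.map_add (-d)

lemma isDeltaFree_stackMulSig (j : Fin k) {p : ℤ × List (Fin k)} (h : IsDeltaFree p.2) :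
    IsDeltaFree (stackMulSig j p).2 := by
  obtain ⟨r, _ | ⟨a, l⟩⟩ := p
  · exact List.isChain_singleton j
  · unfold stackMulSig
    split_ifs with ha
    · exact IsDeltaFree.map_add (List.isChain_cons.mp h).2 2
    · exact List.isChain_cons_cons.mpr ⟨fun h' => ha (by grind), h⟩

lemma isDeltaFree_stackMulSigInv (j : Fin k) {p : ℤ × List (Fin k)} (h : IsDeltaFree p.2) :
    IsDeltaFree (stackMulSigInv j p).2 := by
  obtain ⟨r, _ | ⟨a, l⟩⟩ := p
  · exact List.isChain_singleton _
  · unfold stackMulSigInv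
    split_ifs with ha
    · exact (List.isChain_cons.mp h).2
    · exact List.isChain_cons_cons.mpr ⟨fun h' => ha (by grind), h.map_sub 2⟩

lemma stackMulSigInv_stackMulSig (j : Fin k) {p : ℤ × List (Fin k)} (h : IsDeltaFree p.2) :
    stackMulSigInv j (stackMulSig j p) = p := by
  obtain ⟨r, _ | ⟨a, _ | ⟨b, l⟩⟩⟩ := p
  · simp [stackMulSig, stackMulSigInv]
  · by_cases ha : a = j - 1 <;> simp [stackMulSig, stackMulSigInv, ha]
  · have hab : a ≠ b + 1 := (List.isChain_cons_cons.mp h).1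
    by_cases ha : a = j - 1
    · have hb : b + 2 ≠ j := by grind
      simp [stackMulSig, stackMulSigInv, ha, hb, Function.comp_def]
    · simp [stackMulSig, stackMulSigInv, ha]

lemma stackMulSig_stackMulSigInv (j : Fin k) {p : ℤ × List (Fin k)} (h : IsDeltaFree p.2) :
    stackMulSig j (stackMulSigInv j p) = p := by
  obtain ⟨r, _ | ⟨a, _ | ⟨b, l⟩⟩⟩ := p
  · simp [stackMulSig, stackMulSigInv]
  · by_cases ha : a = j <;> simp [stackMulSig, stackMulSigInv, ha]
  · have hab : a ≠ b + 1 := (List.isChain_cons_cons.mp h).1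
    by_cases ha : a = j
    · have hb : b ≠ j - 1 := by grind
      simp [stackMulSig, stackMulSigInv, ha, hb]
    · simp [stackMulSig, stackMulSigInv, ha, Function.comp_def]

lemma stackMulSig_add_one_stackMulSig (i : Fin k) {p : ℤ × List (Fin k)}
    (h : IsDeltaFree p.2) :
    stackMulSig (i + 1) (stackMulSig i p) = (p.1 + 1, p.2.map (· + 2)) := by
  obtain ⟨r, _ | ⟨a, _ | ⟨b, l⟩⟩⟩ := p
  · simp [stackMulSig]
  · by_cases ha : a = i - 1
    · simp [stackMulSig, ha, show i - 1 + 2 = i + 1 by grind]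
    · simp [stackMulSig, ha]
  · have hab : a ≠ b + 1 := (List.isChain_cons_cons.mp h).1
    by_cases ha : a = i - 1
    · have hb : b + 2 ≠ i := by grind
      simp [stackMulSig, ha, hb, show i - 1 + 2 = i + 1 by grind]
    · simp [stackMulSig, ha]

def DualStack (k : ℕ) [NeZero k] : Type := {p : ℤ × List (Fin k) // IsDeltaFree p.2}

def sigPerm (j : Fin k) : Equiv.Perm (DualStack k) where
  toFun p := ⟨stackMulSig j p.1, isDeltaFree_stackMulSig j p.2⟩
  invFun p := ⟨stackMulSigInv j p.1, isDeltaFree_stackMulSigInv j p.2⟩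
  left_inv p := Subtype.ext (stackMulSigInv_stackMulSig j p.2)
  right_inv p := Subtype.ext (stackMulSig_stackMulSigInv j p.2)

lemma sigPerm_add_one_mul_sigPerm (i : Fin k) :
    sigPerm (i + 1) * sigPerm i = sigPerm 1 * sigPerm (0 : Fin k) :=
  Equiv.ext fun p => Subtype.ext <| by
    have h := stackMulSig_add_one_stackMulSig (0 : Fin k) p.2
    rw [zero_add] at h
    exact (stackMulSig_add_one_stackMulSig i p.2).trans h.symm

/-- A right action, hence a homomorphism into the opposite group: `Equiv.Perm` composes on the
left. -/
def dualAction : DualArtin k →* (Equiv.Perm (DualStack k))ᵐᵒᵖ :=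
  PresentedGroup.toGroup (f := fun j => MulOpposite.op (sigPerm j)) <| by
    rintro _ ⟨i, rfl⟩
    simp only [map_mul, map_inv, FreeGroup.lift_apply_of]
    rw [mul_inv_eq_one, ← MulOpposite.op_mul, ← MulOpposite.op_mul, sigPerm_add_one_mul_sigPerm]

/-- The left dual normal form `δ^r σ_{a₁} ⋯ σ_{aₛ}` of `w`, as the pair `(r, [aₛ, …, a₁])`. -/
def dualNF (w : DualArtin k) : ℤ × List (Fin k) :=
  ((dualAction w).unop ⟨(0, []), List.isChain_nil⟩).1

lemma isDeltaFree_dualNF (w : DualArtin k) : IsDeltaFree (dualNF w).2 :=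
  ((dualAction w).unop _).2

@[simp] lemma dualNF_one : dualNF (1 : DualArtin k) = (0, []) := rfl

lemma dualAction_sig (j : Fin k) : dualAction (sig j) = MulOpposite.op (sigPerm j) :=
  PresentedGroup.toGroup.of _

lemma dualNF_mul_sig (w : DualArtin k) (j : Fin k) :
    dualNF (w * sig j) = stackMulSig j (dualNF w) := by
  rw [dualNF, map_mul, dualAction_sig]
  rfl

lemma dualNF_mul_sig_inv (w : DualArtin k) (j : Fin k) :
    dualNF (w * (sig j)⁻¹) = stackMulSigInv j (dualNF w) := by
  rw [dualNF, map_mul, map_inv, dualAction_sig]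
  rfl

lemma stackEval_dualNF (w : DualArtin k) : stackEval (dualNF w) = w := by
  induction w using DualArtin.induction_on_mul_right with
  | one => simp [stackEval]
  | mul_sig w j ih => rw [dualNF_mul_sig, stackEval_stackMulSig, ih]
  | mul_sig_inv w j ih => rw [dualNF_mul_sig_inv, stackEval_stackMulSigInv, ih]

lemma dualNF_mul_dualDelta (w : DualArtin k) :
    dualNF (w * dualDelta k) = ((dualNF w).1 + 1, (dualNF w).2.map (· + 2)) := by
  rw [dualDelta, ← mul_assoc, dualNF_mul_sig, dualNF_mul_sig, ← zero_add (1 : Fin k),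
    stackMulSig_add_one_stackMulSig 0 (isDeltaFree_dualNF w)]

lemma dualNF_dualDelta_zpow (r : ℤ) : dualNF (dualDelta k ^ r) = (r, []) := by
  induction r using Int.induction_on with
  | zero => simp
  | succ n ih => rw [zpow_add_one, dualNF_mul_dualDelta, ih, List.map_nil]
  | pred n ih =>
    have h := dualNF_mul_dualDelta (dualDelta k ^ (-(n : ℤ) - 1))
    rw [← zpow_add_one, sub_add_cancel, ih] at h
    obtain ⟨h1, h2⟩ := Prod.mk.inj h
    exact Prod.ext (by omega) (List.map_eq_nil_iff.mp h2.symm)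

lemma stackMulSig_cases (j : Fin k) (p : ℤ × List (Fin k)) :
    ((stackMulSig j p).1 = p.1 ∧ (stackMulSig j p).2.length = p.2.length + 1) ∨
      ((stackMulSig j p).1 = p.1 + 1 ∧ (stackMulSig j p).2.length + 1 = p.2.length) := by
  obtain ⟨r, _ | ⟨a, l⟩⟩ := p
  · simp [stackMulSig]
  · by_cases ha : a = j - 1 <;> simp [stackMulSig, ha]

lemma dualNF_mul_prod (w : DualArtin k) {ws : List (DualArtin k)}
    (hws : ∀ x ∈ ws, ∃ i : Fin k, x = sig i) :
    2 * (dualNF (w * ws.prod)).1 + (dualNF (w * ws.prod)).2.length =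
        2 * (dualNF w).1 + (dualNF w).2.length + ws.length ∧
      (dualNF (w * ws.prod)).2.length ≤ (dualNF w).2.length + ws.length := by
  induction ws generalizing w with
  | nil => simp
  | cons x ws ih =>
    obtain ⟨i, rfl⟩ := hws x List.mem_cons_self
    obtain ⟨h1, h2⟩ := ih (w * sig i) fun x hx => hws x (List.mem_cons_of_mem _ hx)
    rw [List.prod_cons, ← mul_assoc]
    rw [dualNF_mul_sig] at h1 h2
    rcases stackMulSig_cases i (dualNF w) with ⟨h3, h4⟩ | ⟨h3, h4⟩ <;>
      simp only [List.length_cons] <;> omega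

lemma IsDualLNF.dualNF_eq {w : DualArtin k} {r : ℤ} {ws : List (DualArtin k)}
    (h : IsDualLNF w r ws) : (dualNF w).1 = r ∧ (dualNF w).2.length = ws.length := by
  obtain ⟨hws, hw, hmin⟩ := h
  obtain ⟨h1, h2⟩ := dualNF_mul_prod (dualDelta k ^ r) hws
  rw [← hw, dualNF_dualDelta_zpow] at h1 h2
  have h3 := hmin (dualNF w).1 ((dualNF w).2.reverse.map sig) (by simp)
    (stackEval_dualNF w).symm
  simp only [List.length_map, List.length_reverse, List.length_nil] at h1 h2 h3
  omega

/-- The quantity `|r| + |r + s|` of the dual distance formula. -/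
def dualLength (p : ℤ × List (Fin k)) : ℕ := p.1.natAbs + (p.1 + p.2.length).natAbs

lemma dualLength_dualNF_mul_le (w : DualArtin k) {g : DualArtin k} (hg : g ∈ dualGens k) :
    dualLength (dualNF (w * g)) ≤ dualLength (dualNF w) + 1 := by
  obtain ⟨j, rfl | rfl⟩ := hg
  · rw [dualNF_mul_sig]
    rcases stackMulSig_cases j (dualNF w) with ⟨h1, h2⟩ | ⟨h1, h2⟩ <;>
      simp only [dualLength] <;> omega
  · have hw : dualNF w = stackMulSig j (dualNF (w * (sig j)⁻¹)) := by
      rw [← dualNF_mul_sig, inv_mul_cancel_right]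
    rw [hw]
    rcases stackMulSig_cases j (dualNF (w * (sig j)⁻¹)) with ⟨h1, h2⟩ | ⟨h1, h2⟩ <;>
      simp only [dualLength] <;> omega

def letter (p : Fin k × Bool) : DualArtin k := if p.2 then sig p.1 else (sig p.1)⁻¹

lemma letter_mem_dualGens (p : Fin k × Bool) : letter p ∈ dualGens k := by
  unfold letter
  split_ifs
  exacts [⟨p.1, Or.inl rfl⟩, ⟨p.1, Or.inr rfl⟩]

lemma evalWord_eq_prod (y : List (Fin k × Bool)) : evalWord y = (y.map letter).prod := rfl

lemma evalWord_append_singleton (y : List (Fin k × Bool)) (q : Fin k × Bool) :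
    evalWord (y ++ [q]) = evalWord y * letter q := by
  simp [evalWord_eq_prod]

/-- The letter pushed on the stack when the letter `p` is multiplied without cancellation. -/
def stackTop (p : Fin k × Bool) : Fin k := if p.2 then p.1 else p.1 - 1

/-- The top of the stack against which the letter `q` cancels. -/
def cancelTop (q : Fin k × Bool) : Fin k := if q.2 then q.1 - 1 else q.1

lemma stackTop_ne_cancelTop {p q : Fin k × Bool} (hpq : ¬(q.1 = p.1 ∧ q.2 = !p.2))
    (hδ : evalWord [p, q] ≠ dualDelta k) (hδinv : evalWord [p, q] ≠ (dualDelta k)⁻¹) :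
    stackTop p ≠ cancelTop q := by
  obtain ⟨i, _ | _⟩ := p <;> obtain ⟨j, _ | _⟩ := q <;>
    simp only [evalWord, stackTop, cancelTop, List.map_cons, List.map_nil, List.prod_cons,
      List.prod_nil, mul_one, if_true, Bool.false_eq_true, if_false] at hpq hδ hδinv ⊢ <;>
    intro h
  · apply hδinv
    rw [← h, ← mul_inv_rev, sig_sub_one_mul_sig]
  · exact hpq ⟨by grind, rfl⟩
  · exact hpq ⟨h.symm, rfl⟩
  · apply hδ
    rw [h, sig_sub_one_mul_sig]

lemma dualNF_mul_letter {w : DualArtin k} {q : Fin k × Bool}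
    (hq : (dualNF w).2.head? ≠ some (cancelTop q)) :
    (dualNF (w * letter q)).1 = (dualNF w).1 - (if q.2 then 0 else 1) ∧
      (dualNF (w * letter q)).2.length = (dualNF w).2.length + 1 ∧
      (dualNF (w * letter q)).2.head? = some (stackTop q) := by
  obtain ⟨j, _ | _⟩ := q <;>
    simp_all [letter, cancelTop, stackTop, dualNF_mul_sig, dualNF_mul_sig_inv, stackMulSig,
      stackMulSigInv]

/-- Along such a word no letter cancels against the stack, so the stack grows by one letter at
each step and `r` decreases exactly at the negative letters. -/
lemma dualNF_evalWord {y : List (Fin k × Bool)}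
    (hy : y.IsChain fun p q => stackTop p ≠ cancelTop q) :
    (dualNF (evalWord y)).1 ≤ 0 ∧ 0 ≤ (dualNF (evalWord y)).1 + y.length ∧
      (dualNF (evalWord y)).2.length = y.length ∧
      (dualNF (evalWord y)).2.head? = y.getLast?.map stackTop := by
  induction y using List.reverseRecOn with
  | nil => simp [evalWord]
  | append_singleton y q ih =>
    obtain ⟨hy, -, hlast⟩ := List.isChain_append.mp hy
    obtain ⟨h1, h2, h3, h4⟩ := ih hy
    have hq : (dualNF (evalWord y)).2.head? ≠ some (cancelTop q) := by
      rw [h4]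
      cases hx : y.getLast? with
      | none => simp
      | some x => simpa using hlast x hx q rfl
    obtain ⟨e1, e2, e3⟩ := dualNF_mul_letter hq
    rw [evalWord_append_singleton, e1, e2, e3, List.length_append, List.length_singleton,
      List.getLast?_concat]
    refine ⟨by split_ifs <;> omega, by split_ifs <;> omega, by omega, rfl⟩

lemma dualLength_dualNF_evalWord {y : List (Fin k × Bool)}
    (hy : y.IsChain fun p q => stackTop p ≠ cancelTop q) :
    dualLength (dualNF (evalWord y)) = y.length := by
  obtain ⟨h1, h2, h3, -⟩ := dualNF_evalWord hy
  simp only [dualLength, h3]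
  omega

lemma wordLength_evalWord {y : List (Fin k × Bool)}
    (hy : y.IsChain fun p q => stackTop p ≠ cancelTop q) :
    wordLength (dualGens k) (evalWord y) = y.length := by
  rw [evalWord_eq_prod, ← List.length_map (f := letter)]
  refine wordLength_prod_eq_length (f := fun w => dualLength (dualNF w)) rfl
    (fun w _ hg => dualLength_dualNF_mul_le w hg)
    (List.forall_mem_map.mpr fun p _ => letter_mem_dualGens p) ?_
  rw [← evalWord_eq_prod, List.length_map, dualLength_dualNF_evalWord hy]

lemma evalWord_ne_dualDelta {y u : List (Fin k × Bool)} (hP : dualPoss y = 1) (hu : u ≠ [])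
    (huy : u <:+: y) : evalWord u ≠ dualDelta k := fun h => by
  have : 2 ≤ dualPoss y :=
    le_csSup ⟨2, by rintro _ (_ | ⟨_, _, _, ⟨rfl, -⟩ | ⟨rfl, -⟩⟩) <;> simp_all⟩
      (Or.inr ⟨u, hu, huy, Or.inr ⟨rfl, h⟩⟩)
  omega

lemma evalWord_ne_inv_dualDelta {y u : List (Fin k × Bool)} (hN : dualNegg y = 1) (hu : u ≠ [])
    (huy : u <:+: y) : evalWord u ≠ (dualDelta k)⁻¹ := fun h => by
  have : 2 ≤ dualNegg y :=
    le_csSup ⟨2, by rintro _ (_ | ⟨_, _, _, ⟨rfl, -⟩ | ⟨rfl, -⟩⟩) <;> simp_all⟩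
      (Or.inr ⟨u, hu, huy, Or.inr ⟨rfl, h⟩⟩)
  omega

lemma isChain_stackTop_ne_cancelTop {y : List (Fin k × Bool)} (hy : FreelyReduced y)
    (hP : dualPoss y = 1) (hN : dualNegg y = 1) :
    y.IsChain fun p q => stackTop p ≠ cancelTop q :=
  (List.isChain_isInfix y).imp fun _ _ h =>
    stackTop_ne_cancelTop (List.isChain_pair.mp (List.IsChain.infix hy h))
      (evalWord_ne_dualDelta hP (List.cons_ne_nil _ _) h)
      (evalWord_ne_inv_dualDelta hN (List.cons_ne_nil _ _) h)

end

theorem prefixes_of_PN_one_words_are_geodesic_general (k : ℕ) [NeZero k]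
    (y : List (Fin k × Bool)) (hy : FreelyReduced y)
    (hP : dualPoss y = 1) (hN : dualNegg y = 1) :
    (∀ n < y.length, ∀ (r r' : ℤ) (ws ws' : List (DualArtin k)),
      IsDualLNF (evalWord (y.take n)) r ws →
      IsDualLNF (evalWord (y.take (n + 1))) r' ws' →
      r'.natAbs + (r' + ws'.length).natAbs = r.natAbs + (r + ws.length).natAbs + 1) ∧
    ∀ n ≤ y.length, wordLength (dualGens k) (evalWord (y.take n)) = n := by
  have hchain := isChain_stackTop_ne_cancelTop hy hP hN
  refine ⟨fun n hn r r' ws ws' hws hws' => ?_, fun n hn => ?_⟩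
  · obtain ⟨rfl, hs⟩ := hws.dualNF_eq
    obtain ⟨rfl, hs'⟩ := hws'.dualNF_eq
    have h := dualLength_dualNF_evalWord (hchain.take n)
    have h' := dualLength_dualNF_evalWord (hchain.take (n + 1))
    simp only [dualLength, hs, hs', List.length_take] at h h'
    omega
  · simpa [hn] using wordLength_evalWord (hchain.take n)

theorem prefixes_of_PN_one_words_are_geodesic (k : ℕ) [NeZero k] (hk : 3 ≤ k)
    (y : List (Fin k × Bool)) (hy : FreelyReduced y)
    (hP : dualPoss y = 1) (hN : dualNegg y = 1) :
    (∀ n < y.length, ∀ (r r' : ℤ) (ws ws' : List (DualArtin k)),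
      IsDualLNF (evalWord (y.take n)) r ws →
      IsDualLNF (evalWord (y.take (n + 1))) r' ws' →
      r'.natAbs + (r' + ws'.length).natAbs = r.natAbs + (r + ws.length).natAbs + 1) ∧
    ∀ n ≤ y.length, wordLength (dualGens k) (evalWord (y.take n)) = n :=
  prefixes_of_PN_one_words_are_geodesic_general k y hy hP hN
end
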